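/- arXiv:2508.06918 — 10 statements merged into one kernel-verified Lean document; each statement's English description precedes it below -/
import Mathlib

section
/- For each i ∈ {0,1,2}, the clone Clo(d_i) generated by the operation d_i on {0,1,2} is minor-equivalent to 𝒵₂, the clone on {0,1} of all operations preserving {(x,y,z,w) ∈ {0,1}⁴ : w = x+y+z mod 2}, {0}, and {1}; that is, there exist minion homomorphisms from Clo(d_i) to 𝒵₂ and from 𝒵₂ to Clo(d_i). Here d_i(x,y,z) equals the minority value of x,y,z if at most two distinct values occur among x,y,z (d_i(x,y,y) = d_i(y,x,y) = d_i(y,y,x) = x), and d_i(x,y,z) = i if x,y,z are pairwise distinct. -/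
/-- `f` preserves the `k`-ary relation `R`. -/
def Preserves {A : Type} {n k : ℕ} (f : (Fin n → A) → A) (R : Set (Fin k → A)) : Prop :=
  ∀ r : Fin n → Fin k → A, (∀ i, r i ∈ R) → (fun j => f fun i => r i j) ∈ R

/-- A family of operations on `A`, indexed so that `C n` are the `(n+1)`-ary operations. -/
abbrev Ops (A : Type) := ∀ n : ℕ, Set ((Fin (n + 1) → A) → A)

/-- `C` is a clone: it contains all projections and is closed under composition. -/
structure IsClone {A : Type} (C : Ops A) : Prop where
  proj : ∀ (n : ℕ) (i : Fin (n + 1)), (fun x => x i) ∈ C n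
  comp : ∀ (n m : ℕ) (f : (Fin (n + 1) → A) → A) (g : Fin (n + 1) → (Fin (m + 1) → A) → A),
      f ∈ C n → (∀ i, g i ∈ C m) → (fun x => f fun i => g i x) ∈ C m

/-- The minor of `f` along `σ`. -/
def Minor {A : Type} {n r : ℕ} (f : (Fin n → A) → A) (σ : Fin n → Fin r) :
    (Fin r → A) → A := fun x => f (x ∘ σ)

/-- `ξ` is a minion homomorphism from `C` to `D`: it maps members of `C` to members of `D`
and commutes with taking minors (on members of `C`). -/
def IsMinionHom {A B : Type} (C : Ops A) (D : Ops B)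
    (ξ : ∀ n : ℕ, ((Fin (n + 1) → A) → A) → ((Fin (n + 1) → B) → B)) : Prop :=
  (∀ n f, f ∈ C n → ξ n f ∈ D n) ∧
    ∀ (n r : ℕ) (f : (Fin (n + 1) → A) → A) (σ : Fin (n + 1) → Fin (r + 1)),
      f ∈ C n → ξ r (Minor f σ) = Minor (ξ n f) σ

/-- There exists a minion homomorphism from `C` to `D`. -/
def MinorLE {A B : Type} (C : Ops A) (D : Ops B) : Prop := ∃ ξ, IsMinionHom C D ξ

/-- `C` and `D` are minor-equivalent. -/
def MinorEquiv {A B : Type} (C : Ops A) (D : Ops B) : Prop := MinorLE C D ∧ MinorLE D C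

/-- A subset of `A` viewed as a unary relation. -/
def unRel {A : Type} (s : Set A) : Set (Fin 1 → A) := {t | t 0 ∈ s}

def psi2 : Set (Fin 2 → Fin 3) :=
  {t | (t 0, t 1) ∈ ({(0, 1), (1, 0), (2, 2)} : Set (Fin 3 × Fin 3))}

def psi2' : Set (Fin 2 → Fin 3) :=
  {t | (t 0, t 1) ∈ ({(0, 1), (1, 0)} : Set (Fin 3 × Fin 3))}

def phi : Set (Fin 2 → Fin 3) :=
  {t | (t 0, t 1) ∈ ({(0, 1), (1, 2), (2, 0)} : Set (Fin 3 × Fin 3))}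

def mu2 : Set (Fin 2 → Fin 3) :=
  {t | (t 0, t 1) ∈ ({(0, 0), (1, 1), (2, 2), (0, 1), (1, 0)} : Set (Fin 3 × Fin 3))}

def rho2 : Set (Fin 2 → Fin 3) :=
  {t | (t 0, t 1) ∈ ({(0, 2), (1, 2), (2, 0), (2, 1)} : Set (Fin 3 × Fin 3))}

/-- The minority value of `x, y, z` when at most two distinct values occur
(and `x` if all three are distinct). -/
def mino {A : Type} [DecidableEq A] (x y z : A) : A :=
  if x = y then z else if x = z then y else x

/-- The relation `T_i' = {(x,y,z,min(x,y,z)) : x,y,z ≠ i}`. -/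
def Tprime (i : Fin 3) : Set (Fin 4 → Fin 3) :=
  {t | t 0 ≠ i ∧ t 1 ≠ i ∧ t 2 ≠ i ∧ t 3 = mino (t 0) (t 1) (t 2)}

/-- The relation `T₂ = T₂' ∪ {(2,2,2,2)}`. -/
def T2rel : Set (Fin 4 → Fin 3) := insert (fun _ => 2) (Tprime 2)

/-- The relation `T = {(x,y,z,x-y+z mod 3)}`. -/
def Trel : Set (Fin 4 → Fin 3) := {t | t 3 = t 0 - t 1 + t 2}

def neqRel : Set (Fin 2 → Fin 2) := {t | t 0 ≠ t 1}

/-- The relation `{(x,y,z,w) ∈ {0,1}⁴ : w = x+y+z mod 2}`. -/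
def Z2rel : Set (Fin 4 → Fin 2) := {t | t 3 = t 0 + t 1 + t 2}

/-- `ℐ₂ = Pol({0},{1})` on `{0,1}`. -/
def CloneI2 : Ops (Fin 2) := fun _ =>
  {f | Preserves f (unRel {0}) ∧ Preserves f (unRel {1})}

/-- `𝒞₂ = Pol(≠,{0},{1})` on `{0,1}`. -/
def CloneC2 : Ops (Fin 2) := fun _ =>
  {f | Preserves f neqRel ∧ Preserves f (unRel {0}) ∧ Preserves f (unRel {1})}

/-- `𝒵₂ = Pol({(x,y,z,w) : w = x+y+z mod 2},{0},{1})` on `{0,1}`. -/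
def CloneZ2 : Ops (Fin 2) := fun _ =>
  {f | Preserves f Z2rel ∧ Preserves f (unRel {0}) ∧ Preserves f (unRel {1})}

/-- The operation `d_i`: minority on triples with at most two distinct values, and
constant value `i` on triples of pairwise distinct values. -/
def dOp (i : Fin 3) : (Fin 3 → Fin 3) → Fin 3 := fun x =>
  if x 0 ≠ x 1 ∧ x 0 ≠ x 2 ∧ x 1 ≠ x 2 then i else mino (x 0) (x 1) (x 2)

/-- The clone generated by a single `(k+1)`-ary operation `g`: the smallest clone
containing `g`. -/
def CloGen {A : Type} {k : ℕ} (g : (Fin (k + 1) → A) → A) : Ops A :=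
  fun n => {f | ∀ D : Ops A, IsClone D → g ∈ D k → f ∈ D n}

/-!
On `{0,1} ⊆ {0,1,2}` every `d_i` is the Boolean minority `x + y + z`, so each member of
`Clo(d_i)` preserves `{0,1}` and restricts there to an idempotent affine Boolean function, i.e. to
a member of `𝒵₂`; restriction obviously commutes with minors.

Conversely, a member of `𝒵₂` is `x ↦ ∑_{j ∈ S} x_j` with `|S|` odd. Send it to the operation on
`{0,1,2}` returning the value that occurs an odd number of times among `(x_j)_{j ∈ S}` (and `i`
if all three values do). Parities of multiplicities add up along fibres, so this commutes with
minors, and these operations lie in `Clo(d_i)` by induction on `|S|`: `oddValue_step` expresses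
the one of arity `|S| + 2` through `d_i` and ones of arity `|S|`.
-/

open Fin.CommRing

section Clones

variable {A : Type} {k : ℕ}

def Pol (R : Set (Fin k → A)) : Ops A := fun _ => {f | Preserves f R}

theorem isClone_pol (R : Set (Fin k → A)) : IsClone (Pol R) where
  proj _ i _ hr := hr i
  comp _ _ _ g hf hg r hr := hf (fun i j => g i fun i' => r i' j) fun i => hg i r hr

theorem IsClone.comp₃ {C : Ops A} (hC : IsClone C) {m : ℕ} {f : (Fin 3 → A) → A}
    {g₀ g₁ g₂ : (Fin (m + 1) → A) → A} (hf : f ∈ C 2) (h₀ : g₀ ∈ C m) (h₁ : g₁ ∈ C m)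
    (h₂ : g₂ ∈ C m) : (fun x => f ![g₀ x, g₁ x, g₂ x]) ∈ C m := by
  convert hC.comp 2 m f ![g₀, g₁, g₂] hf (by intro j; fin_cases j <;> assumption) using 3 with x
  funext j
  fin_cases j <;> rfl

theorem preserves_of_mem_cloGen {g : (Fin (k + 1) → A) → A} {l n : ℕ} {R : Set (Fin l → A)}
    (hg : Preserves g R) {f : (Fin (n + 1) → A) → A} (hf : f ∈ CloGen g n) : Preserves f R :=
  hf (Pol R) (isClone_pol R) hg

end Clones

section Restriction

variable {A B : Type} {m k : ℕ} {e : B → A} {R : Set (Fin k → B)}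

theorem Preserves.image_of_semiconj {g : (Fin m → A) → A} {h : (Fin m → B) → B}
    (hgh : ∀ v, g (e ∘ v) = e (h v)) (hR : Preserves h R) : Preserves g ((e ∘ ·) '' R) := by
  intro r hr
  choose s hs hse using hr
  refine ⟨fun j => h fun i => s i j, hR s hs, funext fun j => ?_⟩
  simp only [Function.comp_apply, ← hgh, ← hse]
  rfl

theorem Preserves.restrict {p : A → B} (hpe : Function.LeftInverse p e) {f : (Fin m → A) → A}
    (hf : Preserves f ((e ∘ ·) '' R)) : Preserves (fun x => p (f (e ∘ x))) R := by
  intro r hr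
  obtain ⟨t, ht, hte⟩ := hf (fun i => e ∘ r i) fun i => ⟨r i, hr i, rfl⟩
  convert ht using 1
  funext j
  rw [← hpe (t j)]
  exact congrArg p (congrFun hte j).symm

end Restriction

section BooleanAffine

variable {m : ℕ} {f : (Fin m → Fin 2) → Fin 2}

theorem map_zero_of_preserves (h₀ : Preserves f (unRel {0})) : f 0 = 0 :=
  h₀ (fun _ _ => 0) fun _ => rfl

theorem map_one_of_preserves (h₁ : Preserves f (unRel {1})) : f 1 = 1 :=
  h₁ (fun _ _ => 1) fun _ => rfl

theorem map_add_add_of_preserves (hZ : Preserves f Z2rel) (x y z : Fin m → Fin 2) :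
    f (x + y + z) = f x + f y + f z :=
  hZ (fun i => ![x i, y i, z i, x i + y i + z i]) fun _ => rfl

theorem map_add_of_preserves (hZ : Preserves f Z2rel) (h₀ : Preserves f (unRel {0}))
    (x y : Fin m → Fin 2) : f (x + y) = f x + f y := by
  have h := map_add_add_of_preserves hZ x y 0
  rwa [add_zero, map_zero_of_preserves h₀, add_zero] at h

theorem eq_sum_of_preserves (hZ : Preserves f Z2rel) (h₀ : Preserves f (unRel {0}))
    (x : Fin m → Fin 2) : f x = ∑ j, x j * f (Pi.single j 1) := by
  let F : (Fin m → Fin 2) →+ Fin 2 := AddMonoidHom.mk' f (map_add_of_preserves hZ h₀)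
  have hsingle : ∀ j (a : Fin 2), f (Pi.single j a) = a * f (Pi.single j 1) := by
    intro j a
    rcases Fin.exists_fin_two.mp ⟨a, rfl⟩ with rfl | rfl
    · rw [Pi.single_zero, map_zero_of_preserves h₀, zero_mul]
    · rw [one_mul]
  calc f x = F (∑ j, Pi.single j (x j)) := by rw [Finset.univ_sum_single]; rfl
    _ = ∑ j, x j * f (Pi.single j 1) := by
      rw [map_sum]
      exact Finset.sum_congr rfl fun j _ => hsingle j (x j)

theorem sum_apply_single_eq_one (hZ : Preserves f Z2rel) (h₀ : Preserves f (unRel {0}))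
    (h₁ : Preserves f (unRel {1})) : ∑ j, f (Pi.single j 1) = 1 := by
  simpa [map_one_of_preserves h₁] using (eq_sum_of_preserves hZ h₀ 1).symm

end BooleanAffine

theorem minority_mem_cloneZ2 : (fun v : Fin 3 → Fin 2 => v 0 + v 1 + v 2) ∈ CloneZ2 2 := by
  refine ⟨fun r hr => ?_, fun r hr => ?_, fun r hr => ?_⟩
  · show r 0 3 + r 1 3 + r 2 3 =
      (r 0 0 + r 1 0 + r 2 0) + (r 0 1 + r 1 1 + r 2 1) + (r 0 2 + r 1 2 + r 2 2)
    rw [hr 0, hr 1, hr 2]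
    ring
  · show r 0 0 + r 1 0 + r 2 0 = 0
    rw [hr 0, hr 1, hr 2]; rfl
  · show r 0 0 + r 1 0 + r 2 0 = 1
    rw [hr 0, hr 1, hr 2]; rfl

theorem dOp_castSucc : ∀ (i : Fin 3) (v : Fin 3 → Fin 2),
    dOp i (Fin.castSucc ∘ v) = Fin.castSucc (v 0 + v 1 + v 2) := by
  decide

def collapse (v : Fin 3) : Fin 2 := Fin.lastCases 0 id v

theorem leftInverse_collapse_castSucc : Function.LeftInverse collapse Fin.castSucc :=
  fun v => Fin.lastCases_castSucc v

theorem minorLE_cloGen_dOp_cloneZ2 (i : Fin 3) : MinorLE (CloGen (k := 2) (dOp i)) CloneZ2 := by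
  refine ⟨fun _ f x => collapse (f (Fin.castSucc ∘ x)), fun n f hf => ?_, fun _ _ _ _ _ => rfl⟩
  have restrict {k : ℕ} {R : Set (Fin k → Fin 2)}
      (hR : Preserves (fun v : Fin 3 → Fin 2 => v 0 + v 1 + v 2) R) :
      Preserves (fun x => collapse (f (Fin.castSucc ∘ x))) R :=
    (preserves_of_mem_cloGen (hR.image_of_semiconj (dOp_castSucc i)) hf).restrict
      leftInverse_collapse_castSucc
  obtain ⟨hZ, h₀, h₁⟩ := minority_mem_cloneZ2
  exact ⟨restrict hZ, restrict h₀, restrict h₁⟩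

-- `p a` is the parity of the number of occurrences of `a` in a tuple; for a tuple of odd length
-- exactly one value or all three values occur an odd number of times.
def oddValue (i : Fin 3) (p : Fin 3 → Fin 2) : Fin 3 :=
  if p 0 = 1 ∧ p 1 = 1 ∧ p 2 = 1 then i else if p 0 = 1 then 0 else if p 1 = 1 then 1 else 2

theorem oddValue_single : ∀ i v : Fin 3, oddValue i (Pi.single v 1) = v := by
  decide

theorem oddValue_step : ∀ (i : Fin 3) (q : Fin 3 → Fin 2), q 0 + q 1 + q 2 = 0 → ∀ a b c : Fin 3,
    oddValue i (Pi.single a 1 + (Pi.single b 1 + (Pi.single c 1 + q))) =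
      dOp i ![dOp i ![a, oddValue i (Pi.single a 1 + q), dOp i ![a, b, c]],
        dOp i ![b, oddValue i (Pi.single b 1 + q), dOp i ![a, b, c]],
        dOp i ![c, oddValue i (Pi.single c 1 + q), dOp i ![a, b, c]]] := by
  decide

def parity (l : List (Fin 3)) : Fin 3 → Fin 2 := (l.map (Pi.single · 1)).sum

theorem sum_parity (l : List (Fin 3)) : ∑ v, parity l v = l.length := by
  induction l with
  | nil => simp [parity]
  | cons a l ih =>
    simp only [parity, List.map_cons, List.sum_cons, Pi.add_apply, Finset.sum_add_distrib,
      Finset.sum_pi_single', Finset.mem_univ, if_true, List.length_cons, Nat.cast_succ] at ih ⊢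
    rw [ih, add_comm]

theorem oddValue_parity_cons₃ (i a b c : Fin 3) {l : List (Fin 3)} (hl : Even l.length) :
    oddValue i (parity (a :: b :: c :: l)) =
      dOp i ![dOp i ![a, oddValue i (parity (a :: l)), dOp i ![a, b, c]],
        dOp i ![b, oddValue i (parity (b :: l)), dOp i ![a, b, c]],
        dOp i ![c, oddValue i (parity (c :: l)), dOp i ![a, b, c]]] := by
  have hl : parity l 0 + parity l 1 + parity l 2 = 0 := by
    rw [← Fin.sum_univ_three, sum_parity, natCast_eq_zero_of_even_of_two_eq_zero hl rfl]
  exact oddValue_step i _ hl a b c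

def oddValueOp (i : Fin 3) {m : ℕ} (l : List (Fin m)) : (Fin m → Fin 3) → Fin 3 :=
  fun x => oddValue i (parity (l.map x))

theorem oddValueOp_mem {i : Fin 3} {D : Ops (Fin 3)} (hD : IsClone D) (hd : dOp i ∈ D 2) {n : ℕ} :
    ∀ l : List (Fin (n + 1)), Odd l.length → oddValueOp i l ∈ D n
  | [], h | [_, _], h => absurd h (by simp)
  | [a], _ => by
    convert hD.proj n a using 2 with x
    simp only [oddValueOp, parity, List.map_cons, List.map_nil, List.sum_cons, List.sum_nil,
      add_zero]
    exact oddValue_single i (x a)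
  | a :: b :: c :: l, h => by
    have hl : Even l.length := by
      simpa [Nat.odd_add_one, parity_simps] using h
    have hm (d : Fin (n + 1)) : oddValueOp i (d :: l) ∈ D n :=
      oddValueOp_mem hD hd (d :: l) (by simpa [Nat.odd_add_one] using hl)
    have hdabc : (fun x => dOp i ![x a, x b, x c]) ∈ D n :=
      hD.comp₃ hd (hD.proj n a) (hD.proj n b) (hD.proj n c)
    convert hD.comp₃ hd (hD.comp₃ hd (hD.proj n a) (hm a) hdabc)
      (hD.comp₃ hd (hD.proj n b) (hm b) hdabc) (hD.comp₃ hd (hD.proj n c) (hm c) hdabc) using 1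
    funext x
    exact oddValue_parity_cons₃ i (x a) (x b) (x c) (by simpa using hl)
  termination_by l => l.length

theorem sum_single_fiberwise {ι κ β M : Type} [Fintype ι] [Fintype κ] [DecidableEq κ]
    [DecidableEq β] [AddCommMonoid M] (x : κ → β) (σ : ι → κ) (c : ι → M) :
    ∑ k, (Pi.single (x k) (∑ j with σ j = k, c j) : β → M) = ∑ j, Pi.single (x (σ j)) (c j) := by
  rw [← Finset.sum_fiberwise Finset.univ σ]
  refine Finset.sum_congr rfl fun k _ => ?_
  calc (Pi.single (x k) (∑ j with σ j = k, c j) : β → M)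
      = ∑ j with σ j = k, Pi.single (x k) (c j) := map_sum (AddMonoidHom.single _ (x k)) _ _
    _ = ∑ j with σ j = k, Pi.single (x (σ j)) (c j) :=
      Finset.sum_congr rfl fun j hj => by rw [(Finset.mem_filter.1 hj).2]

def weightOp (i : Fin 3) {m : ℕ} (c : Fin m → Fin 2) : (Fin m → Fin 3) → Fin 3 :=
  fun x => oddValue i (∑ j, Pi.single (x j) (c j))

theorem weightOp_eq_oddValueOp (i : Fin 3) {m : ℕ} (c : Fin m → Fin 2) :
    weightOp i c = oddValueOp i (Finset.univ.filter (c · = 1)).toList := by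
  funext x
  simp only [weightOp, oddValueOp, parity, List.map_map, Function.comp_def, Finset.sum_map_toList,
    Finset.sum_filter]
  congr 1
  refine Finset.sum_congr rfl fun j _ => ?_
  rcases Fin.exists_fin_two.mp ⟨c j, rfl⟩ with h | h <;> simp [h]

theorem odd_card_filter_eq_one {m : ℕ} {c : Fin m → Fin 2} (h : ∑ j, c j = 1) :
    Odd (Finset.univ.filter (c · = 1)).card := by
  have hcard : ((Finset.univ.filter (c · = 1)).card : Fin 2) = ∑ j, c j := by
    rw [Finset.card_eq_sum_ones, Nat.cast_sum, Finset.sum_filter]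
    refine Finset.sum_congr rfl fun j _ => ?_
    rcases Fin.exists_fin_two.mp ⟨c j, rfl⟩ with h | h <;> simp [h]
  rw [← Nat.not_even_iff_odd, even_iff_two_dvd, ← Fin.natCast_eq_zero, hcard, h]
  decide

theorem weightOp_mem_cloGen (i : Fin 3) {n : ℕ} {c : Fin (n + 1) → Fin 2} (hc : ∑ j, c j = 1) :
    weightOp i c ∈ CloGen (k := 2) (dOp i) n := fun _ hD hd => by
  rw [weightOp_eq_oddValueOp]
  exact oddValueOp_mem hD hd _ (by rw [Finset.length_toList]; exact odd_card_filter_eq_one hc)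

theorem minor_apply_single_of_mem_cloneZ2 {n r : ℕ} {f : (Fin (n + 1) → Fin 2) → Fin 2}
    (hf : f ∈ CloneZ2 n) (σ : Fin (n + 1) → Fin (r + 1)) (k : Fin (r + 1)) :
    Minor f σ (Pi.single k 1) = ∑ j with σ j = k, f (Pi.single j 1) := by
  rw [Minor, eq_sum_of_preserves hf.1 hf.2.1, Finset.sum_filter]
  refine Finset.sum_congr rfl fun j _ => ?_
  simp [Pi.single_apply]

theorem minorLE_cloneZ2_cloGen_dOp (i : Fin 3) : MinorLE CloneZ2 (CloGen (k := 2) (dOp i)) := by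
  refine ⟨fun _ f => weightOp i fun j => f (Pi.single j 1), fun n f hf => ?_, fun n r f σ hf => ?_⟩
  · exact weightOp_mem_cloGen i (sum_apply_single_eq_one hf.1 hf.2.1 hf.2.2)
  · funext x
    show oddValue i (∑ k, Pi.single (x k) (Minor f σ (Pi.single k 1))) =
      oddValue i (∑ j, Pi.single (x (σ j)) (f (Pi.single j 1)))
    simp only [minor_apply_single_of_mem_cloneZ2 hf, sum_single_fiberwise]

/-- For every `i ∈ {0,1,2}`, the clone generated by `d_i` is minor-equivalent to `𝒵₂`. -/
theorem stmt5 : ∀ i : Fin 3, MinorEquiv (CloGen (k := 2) (dOp i)) CloneZ2 :=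
  fun i => ⟨minorLE_cloGen_dOp_cloneZ2 i, minorLE_cloneZ2_cloGen_dOp i⟩
end

section
/- Let m be a Mal'cev operation on {0,1,2}, and let θ₁ and θ₂ be equivalence relations on {0,1,2}, each distinct from the equality relation and from the full relation {0,1,2}², such that m preserves both θ₁ (as a binary relation) and θ₂. Then θ₁ = θ₂. Equivalently: a Mal'cev operation on a three-element set preserves at most one nontrivial equivalence relation. -/
lemma pres_pairs {m : (Fin 3 → Fin 3) → Fin 3} {E : Set (Fin 3 × Fin 3)}
    (hp : Preserves m {t : Fin 2 → Fin 3 | (t 0, t 1) ∈ E})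
    {a1 b1 a2 b2 a3 b3 : Fin 3} (h1 : (a1,b1) ∈ E) (h2 : (a2,b2) ∈ E) (h3 : (a3,b3) ∈ E) :
    (m ![a1,a2,a3], m ![b1,b2,b3]) ∈ E := by
  have H := hp ![![a1,b1],![a2,b2],![a3,b3]] (by
    intro i; fin_cases i <;> simpa using ‹_›)
  have e0 : (fun i => ![![a1,b1],![a2,b2],![a3,b3]] i 0) = ![a1,a2,a3] := by
    funext i; fin_cases i <;> simp
  have e1 : (fun i => ![![a1,b1],![a2,b2],![a3,b3]] i 1) = ![b1,b2,b3] := by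
    funext i; fin_cases i <;> simp
  have H' : (m fun i => ![![a1,b1],![a2,b2],![a3,b3]] i 0,
      m fun i => ![![a1,b1],![a2,b2],![a3,b3]] i 1) ∈ E := H
  rw [e0, e1] at H'
  exact H'

lemma univ_of_chain {E : Set (Fin 3 × Fin 3)} (hE : Equivalence fun x y => (x, y) ∈ E)
    {x y z : Fin 3} (hxy : x ≠ y) (hyz : y ≠ z) (hxz : x ≠ z)
    (h1 : (x,y) ∈ E) (h2 : (y,z) ∈ E) : E = Set.univ := by
  have hxz' : (x,z) ∈ E := hE.trans h1 h2
  have key : ∀ x y z u : Fin 3, x ≠ y → y ≠ z → x ≠ z → u = x ∨ u = y ∨ u = z := by decide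
  have hmem : ∀ u : Fin 3, u = x ∨ u = y ∨ u = z := fun u => key x y z u hxy hyz hxz
  ext ⟨u, v⟩
  simp only [Set.mem_univ, iff_true]
  rcases hmem u with rfl | rfl | rfl <;> rcases hmem v with rfl | rfl | rfl <;>
    first
      | exact hE.refl _
      | exact h1
      | exact hE.symm h1
      | exact h2
      | exact hE.symm h2
      | exact hxz'
      | exact hE.symm hxz'

lemma share : ∀ a b c d : Fin 3, a ≠ b → c ≠ d → ¬((c = a ∧ d = b) ∨ (c = b ∧ d = a)) →
    ((b = c ∧ a ≠ d) ∨ (b = d ∧ a ≠ c) ∨ (a = c ∧ b ≠ d) ∨ (a = d ∧ b ≠ c)) := by decide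

lemma uniq {E : Set (Fin 3 × Fin 3)} (hE : Equivalence fun x y => (x, y) ∈ E)
    (hnf : E ≠ Set.univ) {a b c d : Fin 3} (hab : a ≠ b) (hcd : c ≠ d)
    (h1 : (a,b) ∈ E) (h2 : (c,d) ∈ E) : (c = a ∧ d = b) ∨ (c = b ∧ d = a) := by
  by_contra h
  apply hnf
  rcases share a b c d hab hcd h with ⟨e, hne⟩ | ⟨e, hne⟩ | ⟨e, hne⟩ | ⟨e, hne⟩
  · subst e; exact univ_of_chain hE hab hcd hne h1 h2
  · subst e; exact univ_of_chain hE hab (Ne.symm hcd) hne h1 (hE.symm h2)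
  · subst e; exact univ_of_chain hE (Ne.symm hab) hcd hne (hE.symm h1) h2
  · subst e; exact univ_of_chain hE (Ne.symm hab) (Ne.symm hcd) hne (hE.symm h1) (hE.symm h2)

lemma shape {E : Set (Fin 3 × Fin 3)} (hE : Equivalence fun x y => (x, y) ∈ E)
    (hnf : E ≠ Set.univ) {a b : Fin 3} (hab : a ≠ b) (hmem : (a,b) ∈ E) :
    E = {p | p.1 = p.2} ∪ {(a,b), (b,a)} := by
  ext ⟨u, v⟩
  constructor
  · intro h
    by_cases huv : u = v
    · exact Or.inl huv
    · rcases uniq hE hnf hab huv hmem h with ⟨rfl, rfl⟩ | ⟨rfl, rfl⟩ <;> simp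
  · rintro (h | h | h)
    · simp at h; cases h; exact hE.refl _
    · simp at h; obtain ⟨rfl, rfl⟩ := h; exact hmem
    · simp at h; obtain ⟨rfl, rfl⟩ := h; exact hE.symm hmem

lemma malcev_contra {m : (Fin 3 → Fin 3) → Fin 3}
    (hm : ∀ x y : Fin 3, m ![y, x, x] = y ∧ m ![x, x, y] = y)
    {E₁ E₂ : Set (Fin 3 × Fin 3)}
    (hE₁ : Equivalence fun x y => (x, y) ∈ E₁)
    (hE₂ : Equivalence fun x y => (x, y) ∈ E₂)
    (hnf₁ : E₁ ≠ Set.univ) (hnf₂ : E₂ ≠ Set.univ)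
    (hp₁ : Preserves m {t : Fin 2 → Fin 3 | (t 0, t 1) ∈ E₁})
    (hp₂ : Preserves m {t : Fin 2 → Fin 3 | (t 0, t 1) ∈ E₂})
    {x y z : Fin 3} (hxy : x ≠ y) (hyz : y ≠ z) (hxz : x ≠ z)
    (h1 : (x,y) ∈ E₁) (h2 : (y,z) ∈ E₂) : False := by
  have hwz : (m ![x,y,z], z) ∈ E₁ := by
    have := pres_pairs hp₁ h1 (hE₁.refl y) (hE₁.refl z)
    rwa [(hm y z).2] at this
  have hwx : (m ![x,y,z], x) ∈ E₂ := by
    have := pres_pairs hp₂ (hE₂.refl x) h2 (hE₂.refl z)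
    rwa [(hm z x).1] at this
  have hw : m ![x,y,z] = z := by
    by_contra hne
    rcases uniq hE₁ hnf₁ hxy hne h1 hwz with ⟨_, h'⟩ | ⟨_, h'⟩
    · exact hyz h'.symm
    · exact hxz h'.symm
  rw [hw] at hwx
  rcases uniq hE₂ hnf₂ hyz (Ne.symm hxz) h2 hwx with ⟨h', _⟩ | ⟨_, h'⟩
  · exact hyz h'.symm
  · exact hxy h'

/-- A Mal'cev operation on a three-element set preserves at most one nontrivial
equivalence relation (equivalence relations identified with their sets of pairs). -/
theorem stmt6 (m : (Fin 3 → Fin 3) → Fin 3)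
    (hm : ∀ x y : Fin 3, m ![y, x, x] = y ∧ m ![x, x, y] = y)
    (E₁ E₂ : Set (Fin 3 × Fin 3))
    (hE₁ : Equivalence fun x y => (x, y) ∈ E₁)
    (hE₂ : Equivalence fun x y => (x, y) ∈ E₂)
    (hE₁ne : E₁ ≠ {p | p.1 = p.2}) (hE₁nf : E₁ ≠ Set.univ)
    (hE₂ne : E₂ ≠ {p | p.1 = p.2}) (hE₂nf : E₂ ≠ Set.univ)
    (hp₁ : Preserves m {t : Fin 2 → Fin 3 | (t 0, t 1) ∈ E₁})
    (hp₂ : Preserves m {t : Fin 2 → Fin 3 | (t 0, t 1) ∈ E₂}) :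
    E₁ = E₂ := by
  -- extract an off-diagonal pair of E₁
  have hdsub : ∀ E : Set (Fin 3 × Fin 3), (Equivalence fun x y => (x, y) ∈ E) →
      {p : Fin 3 × Fin 3 | p.1 = p.2} ⊆ E := by
    rintro E hE ⟨u, v⟩ h
    simp only [Set.mem_setOf_eq] at h
    subst h; exact hE.refl u
  have hex : ∀ E : Set (Fin 3 × Fin 3), (Equivalence fun x y => (x, y) ∈ E) →
      E ≠ {p | p.1 = p.2} → ∃ a b : Fin 3, a ≠ b ∧ (a, b) ∈ E := by
    intro E hE hne
    by_contra hc
    push_neg at hc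
    apply hne
    apply Set.Subset.antisymm _ (hdsub E hE)
    rintro ⟨u, v⟩ h
    by_contra huv
    exact hc u v (by simpa using huv) h
  obtain ⟨a, b, hab, hmem₁⟩ := hex E₁ hE₁ hE₁ne
  obtain ⟨c, d, hcd, hmem₂⟩ := hex E₂ hE₂ hE₂ne
  by_cases hsame : (c = a ∧ d = b) ∨ (c = b ∧ d = a)
  · rw [shape hE₁ hE₁nf hab hmem₁, shape hE₂ hE₂nf hcd hmem₂]
    rcases hsame with ⟨rfl, rfl⟩ | ⟨rfl, rfl⟩
    · rfl
    · rw [Set.pair_comm]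
  · exfalso
    rcases share a b c d hab hcd hsame with ⟨e, hne⟩ | ⟨e, hne⟩ | ⟨e, hne⟩ | ⟨e, hne⟩
    · subst e
      exact malcev_contra hm hE₁ hE₂ hE₁nf hE₂nf hp₁ hp₂ hab hcd hne hmem₁ hmem₂
    · subst e
      exact malcev_contra hm hE₁ hE₂ hE₁nf hE₂nf hp₁ hp₂ hab (Ne.symm hcd) hne hmem₁ (hE₂.symm hmem₂)
    · subst e
      exact malcev_contra hm hE₁ hE₂ hE₁nf hE₂nf hp₁ hp₂ (Ne.symm hab) hcd hne (hE₁.symm hmem₁) hmem₂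
    · subst e
      exact malcev_contra hm hE₁ hE₂ hE₁nf hE₂nf hp₁ hp₂ (Ne.symm hab) (Ne.symm hcd) hne (hE₁.symm hmem₁) (hE₂.symm hmem₂)
end

section
/- There is no Mal'cev operation m on {0,1,2} that preserves both the equivalence relation μ₂ and the 4-ary relation T(μ₂,1) := {(x, y, z, m(x,y,z)) : (x,y) ∈ μ₂ and z ∈ {0,1,2}}. (This expresses that for a three-element Mal'cev algebra with nontrivial congruence μ₂, the congruence μ₂ does not centralize the full congruence; hence if μ₂ is an Abelian monolith, its centralizer (0 : μ₂) equals μ₂.) -/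
/-- No Mal'cev operation `m` on `{0,1,2}` preserves both `μ₂` and the 4-ary relation
`T(μ₂,1) = {(x,y,z,m(x,y,z)) : (x,y) ∈ μ₂}`: the congruence `μ₂` never centralizes the
full congruence. -/
theorem stmt7 : ¬ ∃ m : (Fin 3 → Fin 3) → Fin 3,
    (∀ x y : Fin 3, m ![y, x, x] = y ∧ m ![x, x, y] = y) ∧
    Preserves m mu2 ∧
    Preserves m {t : Fin 4 → Fin 3 | ![t 0, t 1] ∈ mu2 ∧ t 3 = m ![t 0, t 1, t 2]} := by
  rintro ⟨m, hM, h1, h2⟩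
  -- useful Mal'cev values
  have hA : m ![0, 0, 2] = 2 := (hM 0 2).2
  have hB : m ![2, 2, 2] = 2 := (hM 2 2).2
  have hC : m ![0, 1, 1] = 0 := (hM 1 0).1
  have hD : m ![2, 0, 0] = 2 := (hM 0 2).1
  have hE : m ![2, 1, 1] = 2 := (hM 1 2).1
  have hF : m ![2, 2, 1] = 1 := (hM 2 1).2
  have hG : m ![2, 2, 0] = 0 := (hM 2 0).2
  -- membership facts for mu2
  have mem00 : (![0, 0] : Fin 2 → Fin 3) ∈ mu2 := Or.inl rfl
  have mem22 : (![2, 2] : Fin 2 → Fin 3) ∈ mu2 := Or.inr (Or.inr (Or.inl rfl))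
  have mem01 : (![0, 1] : Fin 2 → Fin 3) ∈ mu2 := Or.inr (Or.inr (Or.inr (Or.inl rfl)))
  have mem10 : (![1, 0] : Fin 2 → Fin 3) ∈ mu2 := Or.inr (Or.inr (Or.inr (Or.inr rfl)))
  -- Step 1 : m ![0,1,2] = 2
  have key : m ![0, 1, 2] = 2 := by
    have h := h1 ![![0, 0], ![1, 0], ![2, 2]] (by
      intro i
      fin_cases i
      · exact mem00
      · exact mem10
      · exact mem22)
    have e0 : (fun i => (![![(0:Fin 3), 0], ![1, 0], ![2, 2]] : Fin 3 → Fin 2 → Fin 3) i 0)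
        = ![0, 1, 2] := by funext i; fin_cases i <;> rfl
    have e1 : (fun i => (![![(0:Fin 3), 0], ![1, 0], ![2, 2]] : Fin 3 → Fin 2 → Fin 3) i 1)
        = ![0, 0, 2] := by funext i; fin_cases i <;> rfl
    have h' : (((m fun i => (![![(0:Fin 3), 0], ![1, 0], ![2, 2]] : Fin 3 → Fin 2 → Fin 3) i 0),
        (m fun i => (![![(0:Fin 3), 0], ![1, 0], ![2, 2]] : Fin 3 → Fin 2 → Fin 3) i 1)) : Fin 3 × Fin 3)
        ∈ ({(0, 0), (1, 1), (2, 2), (0, 1), (1, 0)} : Set (Fin 3 × Fin 3)) := h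
    rw [e0, e1, hA] at h'
    rcases h' with h'' | h'' | h'' | h'' | h''
    · have hb : (2 : Fin 3) = 0 := congrArg Prod.snd h''
      exact absurd hb (by decide)
    · have hb : (2 : Fin 3) = 1 := congrArg Prod.snd h''
      exact absurd hb (by decide)
    · exact congrArg Prod.fst h''
    · have hb : (2 : Fin 3) = 1 := congrArg Prod.snd h''
      exact absurd hb (by decide)
    · have h5 : ((m ![0, 1, 2], (2 : Fin 3)) : Fin 3 × Fin 3) = (1, 0) := h''
      have hb : (2 : Fin 3) = 0 := congrArg Prod.snd h5
      exact absurd hb (by decide)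
  -- Step 2 : the term condition instance
  have h := h2 ![![2, 2, 2, 2], ![0, 1, 2, 2], ![0, 1, 1, 0]] (by
    intro i
    fin_cases i
    · exact ⟨mem22, hB.symm⟩
    · exact ⟨mem01, key.symm⟩
    · exact ⟨mem01, hC.symm⟩)
  obtain ⟨-, h3⟩ := h
  have e0 : (fun i => (![![2, 2, 2, 2], ![0, 1, 2, 2], ![0, 1, 1, 0]] : Fin 3 → Fin 4 → Fin 3) i 0) = ![2, 0, 0] := by
    funext i; fin_cases i <;> rfl
  have e1 : (fun i => (![![2, 2, 2, 2], ![0, 1, 2, 2], ![0, 1, 1, 0]] : Fin 3 → Fin 4 → Fin 3) i 1) = ![2, 1, 1] := by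
    funext i; fin_cases i <;> rfl
  have e2 : (fun i => (![![2, 2, 2, 2], ![0, 1, 2, 2], ![0, 1, 1, 0]] : Fin 3 → Fin 4 → Fin 3) i 2) = ![2, 2, 1] := by
    funext i; fin_cases i <;> rfl
  have e3 : (fun i => (![![2, 2, 2, 2], ![0, 1, 2, 2], ![0, 1, 1, 0]] : Fin 3 → Fin 4 → Fin 3) i 3) = ![2, 2, 0] := by
    funext i; fin_cases i <;> rfl
  have h4 : (m fun i => (![![2, 2, 2, 2], ![0, 1, 2, 2], ![0, 1, 1, 0]] : Fin 3 → Fin 4 → Fin 3) i 3)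
      = m ![(m fun i => (![![2, 2, 2, 2], ![0, 1, 2, 2], ![0, 1, 1, 0]] : Fin 3 → Fin 4 → Fin 3) i 0),
            (m fun i => (![![2, 2, 2, 2], ![0, 1, 2, 2], ![0, 1, 1, 0]] : Fin 3 → Fin 4 → Fin 3) i 1),
            (m fun i => (![![2, 2, 2, 2], ![0, 1, 2, 2], ![0, 1, 1, 0]] : Fin 3 → Fin 4 → Fin 3) i 2)] := h3
  rw [e0, e1, e2, e3, hD, hE, hG] at h4
  rw [hF] at h4
  rw [hF] at h4
  exact absurd h4 (by decide)
end

section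
/- Let A be a set, let α and β be reflexive binary relations on A, and let d and d' be Mal'cev operations on A. If d' preserves the 4-ary relation T(α,β) := {(x, y, z, d(x,y,z)) : x α y and y β z}, then d'(x,y,z) = d(x,y,z) for all x, y, z ∈ A with x α y and y β z. (In particular, when α centralizes β in a Mal'cev algebra, the relation T(α,β) does not depend on the choice of the Mal'cev term.) -/
/-- If `α, β` are reflexive relations, `d, d'` are Mal'cev operations, and `d'` preserves
`T(α,β) = {(x,y,z,d(x,y,z)) : x α y, y β z}`, then `d'` agrees with `d` on all triples
`(x,y,z)` with `x α y` and `y β z`. -/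
theorem stmt8 (A : Type) (α β : A → A → Prop)
    (hα : ∀ x, α x x) (hβ : ∀ x, β x x)
    (d d' : (Fin 3 → A) → A)
    (hd : ∀ x y : A, d ![y, x, x] = y ∧ d ![x, x, y] = y)
    (hd' : ∀ x y : A, d' ![y, x, x] = y ∧ d' ![x, x, y] = y)
    (hpres : Preserves d'
      {t : Fin 4 → A | α (t 0) (t 1) ∧ β (t 1) (t 2) ∧ t 3 = d ![t 0, t 1, t 2]}) :
    ∀ x y z : A, α x y → β y z → d' ![x, y, z] = d ![x, y, z] := by
  intro x y z hxy hyz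
  set M : Fin 3 → Fin 4 → A := ![![x,y,y,x], ![y,y,y,y], ![y,y,z,z]] with hM
  have hrows : ∀ i, M i ∈ {t : Fin 4 → A | α (t 0) (t 1) ∧ β (t 1) (t 2) ∧ t 3 = d ![t 0, t 1, t 2]} := by
    intro i
    fin_cases i
    · exact ⟨hxy, hβ y, ((hd y x).1).symm⟩
    · exact ⟨hα y, hβ y, ((hd y y).1).symm⟩
    · exact ⟨hα y, hyz, ((hd y z).2).symm⟩
  obtain ⟨-, -, h3⟩ := hpres M hrows
  have f0 : (fun i => M i 0) = ![x,y,y] := by funext i; fin_cases i <;> rfl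
  have f1 : (fun i => M i 1) = ![y,y,y] := by funext i; fin_cases i <;> rfl
  have f2 : (fun i => M i 2) = ![y,y,z] := by funext i; fin_cases i <;> rfl
  have f3 : (fun i => M i 3) = ![x,y,z] := by funext i; fin_cases i <;> rfl
  simp only at h3
  rw [f0, f1, f2, f3, (hd' y x).1, (hd' y y).1, (hd' y z).2] at h3
  exact h3
end

section
/- Let A be a set, let d be a Mal'cev operation on A, let μ be an equivalence relation on A, and let f be a majority operation on A. If f preserves the 4-ary relation T(μ) := {(x, y, z, d(x,y,z)) : x μ y and y μ z}, then μ is the equality relation on A, i.e., x μ y implies x = y. (Hence for a Mal'cev algebra, the witness relation of an Abelian nontrivial congruence is never invariant under a majority operation.) -/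
/-- If `d` is a Mal'cev operation, `μ` an equivalence relation, and the majority operation
`f` preserves `T(μ) = {(x,y,z,d(x,y,z)) : x μ y, y μ z}`, then `μ` is the equality
relation. -/
theorem stmt9 (A : Type) (μ : A → A → Prop) (hμ : Equivalence μ)
    (d : (Fin 3 → A) → A)
    (hd : ∀ x y : A, d ![y, x, x] = y ∧ d ![x, x, y] = y)
    (f : (Fin 3 → A) → A)
    (hf : ∀ x y : A, f ![x, x, y] = x ∧ f ![x, y, x] = x ∧ f ![y, x, x] = x)
    (hpres : Preserves f
      {t : Fin 4 → A | μ (t 0) (t 1) ∧ μ (t 1) (t 2) ∧ t 3 = d ![t 0, t 1, t 2]}) :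
    ∀ x y : A, μ x y → x = y := by
  intro x y hxy
  have hyx := hμ.symm hxy
  set S : Set (Fin 4 → A) :=
    {t : Fin 4 → A | μ (t 0) (t 1) ∧ μ (t 1) (t 2) ∧ t 3 = d ![t 0, t 1, t 2]} with hS
  have key : ∀ a b c : Fin 4 → A, a ∈ S → b ∈ S → c ∈ S →
      f ![a 3, b 3, c 3] =
        d ![f ![a 0, b 0, c 0], f ![a 1, b 1, c 1], f ![a 2, b 2, c 2]] := by
    intro a b c ha hb hc
    have h := (hpres ![a, b, c] (by intro i; fin_cases i <;> assumption)).2.2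
    have e0 : (fun i => ![a, b, c] i (0 : Fin 4)) = ![a 0, b 0, c 0] := by
      funext i; fin_cases i <;> rfl
    have e1 : (fun i => ![a, b, c] i (1 : Fin 4)) = ![a 1, b 1, c 1] := by
      funext i; fin_cases i <;> rfl
    have e2 : (fun i => ![a, b, c] i (2 : Fin 4)) = ![a 2, b 2, c 2] := by
      funext i; fin_cases i <;> rfl
    have e3 : (fun i => ![a, b, c] i (3 : Fin 4)) = ![a 3, b 3, c 3] := by
      funext i; fin_cases i <;> rfl
    simpa only [e0, e1, e2, e3] using h
  set e := d ![x, y, x] with he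
  have mem : ∀ p q r : A, μ p q → μ q r → ![p, q, r, d ![p, q, r]] ∈ S := by
    intro p q r h1 h2
    refine ⟨?_, ?_, ?_⟩ <;>
      simp only [hS, Set.mem_setOf_eq, Matrix.cons_val_zero, Matrix.cons_val_one,
        Matrix.head_cons, Fin.isValue, Matrix.cons_val_fin_one]
    · exact h1
    · exact h2
    · show (![p, q, r, d ![p, q, r]]) 3 = _
      simp [Matrix.cons_val_fin_one]
  have v2 : ∀ a b c d : A, (![a, b, c, d] : Fin 4 → A) 2 = c := fun _ _ _ _ => rfl
  have v3 : ∀ a b c d : A, (![a, b, c, d] : Fin 4 → A) 3 = d := fun _ _ _ _ => rfl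
  -- memberships
  have m1 : ![x, y, y, x] ∈ S := by
    have := mem x y y hxy (hμ.refl y); rwa [(hd y x).1] at this
  have m2 : ![x, y, x, e] ∈ S := mem x y x hxy hyx
  have m3 : ![x, x, x, x] ∈ S := by
    have := mem x x x (hμ.refl x) (hμ.refl x); rwa [(hd x x).1] at this
  -- Step 1 : e = x
  have h1 := key _ _ _ m1 m2 m3
  simp only [Matrix.cons_val_zero, Matrix.cons_val_one, Matrix.head_cons, Fin.isValue,
    Matrix.cons_val_fin_one, v2, v3] at h1
  rw [(hf x e).2.1, (hf x x).1, (hf y x).1, (hf x y).2.2, ← he] at h1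
  rw [← h1] at m2
  have m4 : ![x, x, y, y] ∈ S := by
    have := mem x x y (hμ.refl x) hxy; rwa [(hd x y).2] at this
  have m5 : ![y, y, y, y] ∈ S := by
    have := mem y y y (hμ.refl y) (hμ.refl y); rwa [(hd y y).1] at this
  have h2 := key _ _ _ m2 m4 m5
  simp only [Matrix.cons_val_zero, Matrix.cons_val_one, Matrix.head_cons, Fin.isValue,
    Matrix.cons_val_fin_one, v2, v3] at h2
  rw [(hf y x).2.2, (hf x y).1, (hf y x).2.1, (hd y x).1] at h2
  exact h2.symm
end

section
/- Let m be a majority operation on {0,1,2} (m(x,x,y) = m(x,y,x) = m(y,x,x) = x for all x,y) that preserves the relations μ₂ and ψ₂. Then m(1,2,0) ≠ m(0,2,1); in particular, m does not satisfy the identity m(x,y,z) = m(z,y,x). Consequently, the clone Pol(ψ₂, μ₂, {0},{1},{2}) contains no quasi majority operation f satisfying f(x,y,z) = f(z,y,x), whereas the Boolean majority operation on {0,1} preserves ≠, {0}, {1} and satisfies this identity. -/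
/-- The Boolean majority operation on `{0,1}`. -/
def maj2 : (Fin 3 → Fin 2) → Fin 2 := fun x => if x 0 = x 1 then x 0 else x 2
lemma appcol {A B : Type} {k : ℕ} (m : (Fin 3 → A) → B) (r : Fin 3 → Fin k → A) (j : Fin k) :
    m (fun i => r i j) = m ![r 0 j, r 1 j, r 2 j] := by
  congr 1; funext i; fin_cases i <;> rfl

lemma aux1 : ∀ a b c d e g : Fin 2, a ≠ d → b ≠ e → c ≠ g →
    maj2 ![a, b, c] ≠ maj2 ![d, e, g] := by decide

lemma key : ∀ m : (Fin 3 → Fin 3) → Fin 3,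
    (∀ x y : Fin 3, m ![x, x, y] = x ∧ m ![x, y, x] = x ∧ m ![y, x, x] = x) →
    Preserves m mu2 → Preserves m psi2 → m ![1, 2, 0] ≠ m ![0, 2, 1] := by
  intro m hmaj hmu hpsi
  have e1 := hmu ![![1,1],![2,2],![0,1]] (by intro i; fin_cases i <;> simp [mu2])
  simp only [mu2, Set.mem_setOf_eq] at e1
  rw [appcol m ![![1,1],![2,2],![0,1]] 0, appcol m ![![1,1],![2,2],![0,1]] 1] at e1
  simp [(hmaj 1 2).2.1, Prod.ext_iff] at e1
  have e2 := hmu ![![0,0],![2,2],![1,0]] (by intro i; fin_cases i <;> simp [mu2])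
  simp only [mu2, Set.mem_setOf_eq] at e2
  rw [appcol m ![![0,0],![2,2],![1,0]] 0, appcol m ![![0,0],![2,2],![1,0]] 1] at e2
  simp [(hmaj 0 2).2.1, Prod.ext_iff] at e2
  have e3 := hpsi ![![1,0],![2,2],![0,1]] (by intro i; fin_cases i <;> simp [psi2])
  simp only [psi2, Set.mem_setOf_eq] at e3
  rw [appcol m ![![1,0],![2,2],![0,1]] 0, appcol m ![![1,0],![2,2],![0,1]] 1] at e3
  simp [Prod.ext_iff] at e3
  rcases e3 with ⟨h, h'⟩ | ⟨h, h'⟩ | ⟨h, h'⟩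
  · rw [h, h']; decide
  · rw [h, h']; decide
  · rw [h] at e1; rcases e1 with h1 | h1 <;> exact absurd h1 (by decide)


/-- Every majority operation on `{0,1,2}` preserving `μ₂` and `ψ₂` satisfies
`m(1,2,0) ≠ m(0,2,1)`, so does not satisfy `m(x,y,z) ≈ m(z,y,x)`; hence
`Pol(ψ₂,μ₂,{0},{1},{2})` contains no quasi majority operation satisfying
`f(x,y,z) ≈ f(z,y,x)`, whereas the Boolean majority operation preserves `≠, {0}, {1}`
and satisfies that identity. -/
theorem stmt14 :
    (∀ m : (Fin 3 → Fin 3) → Fin 3,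
      (∀ x y : Fin 3, m ![x, x, y] = x ∧ m ![x, y, x] = x ∧ m ![y, x, x] = x) →
      Preserves m mu2 → Preserves m psi2 →
      m ![1, 2, 0] ≠ m ![0, 2, 1] ∧ ¬ ∀ x y z : Fin 3, m ![x, y, z] = m ![z, y, x]) ∧
    (¬ ∃ f : (Fin 3 → Fin 3) → Fin 3,
      (Preserves f psi2 ∧ Preserves f mu2 ∧ ∀ c : Fin 3, Preserves f (unRel {c})) ∧
      (∀ x y : Fin 3, f ![x, y, y] = f ![y, y, y] ∧ f ![y, x, y] = f ![y, y, y] ∧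
        f ![y, y, x] = f ![y, y, y]) ∧
      (∀ x y z : Fin 3, f ![x, y, z] = f ![z, y, x])) ∧
    ((∀ x y : Fin 2, maj2 ![x, x, y] = x ∧ maj2 ![x, y, x] = x ∧ maj2 ![y, x, x] = x) ∧
      Preserves maj2 neqRel ∧
      Preserves maj2 (unRel {0}) ∧ Preserves maj2 (unRel {1}) ∧
      ∀ x y z : Fin 2, maj2 ![x, y, z] = maj2 ![z, y, x]) := by
  refine ⟨fun m hmaj hmu hpsi =>
      ⟨key m hmaj hmu hpsi, fun h => key m hmaj hmu hpsi (h 1 2 0)⟩, ?_, ?_, ?_, ?_, ?_, ?_⟩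
  · rintro ⟨f, ⟨hpsi, hmu, hun⟩, hqm, hsym⟩
    have hdiag : ∀ c : Fin 3, f ![c, c, c] = c := by
      intro c
      have h := hun c (fun _ _ => c) (fun i => by simp [unRel])
      have h2 : f (fun _ => c) = c := by simpa [unRel] using h
      have h3 : (![c, c, c] : Fin 3 → Fin 3) = fun _ => c := by
        funext i; fin_cases i <;> rfl
      rw [h3]; exact h2
    have hmaj : ∀ x y : Fin 3, f ![x, x, y] = x ∧ f ![x, y, x] = x ∧ f ![y, x, x] = x := by
      intro x y
      exact ⟨by rw [(hqm y x).2.2, hdiag], by rw [(hqm y x).2.1, hdiag],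
        by rw [(hqm y x).1, hdiag]⟩
    exact key f hmaj hmu hpsi (hsym 1 2 0)
  · decide
  · intro r hr
    have h0 := hr 0; have h1 := hr 1; have h2 := hr 2
    simp only [neqRel, Set.mem_setOf_eq] at h0 h1 h2 ⊢
    rw [appcol maj2 r 0, appcol maj2 r 1]
    exact aux1 _ _ _ _ _ _ h0 h1 h2
  · intro r hr
    simp only [unRel, Set.mem_setOf_eq, Set.mem_singleton_iff] at hr ⊢
    rw [appcol maj2 r 0, hr 0, hr 1, hr 2]; rfl
  · intro r hr
    simp only [unRel, Set.mem_setOf_eq, Set.mem_singleton_iff] at hr ⊢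
    rw [appcol maj2 r 0, hr 0, hr 1, hr 2]; rfl
  · decide
end

section
/- There is no 5-ary operation f on {0,1,2} that preserves both ψ₂ and ρ₂, is totally symmetric (f(x₁,…,x₅) = f(x_{π(1)},…,x_{π(5)}) for every permutation π of {1,…,5}), and satisfies the identity f(x,x,y,y,z) = f(x,y,y,z,z) for all x,y,z. In particular, the clone Pol(ψ₂, ρ₂, {0,1}, {0},{1},{2}) does not satisfy the minor condition Σ₂ asking for a 5-ary symmetric operation with f(x,x,y,y,z) ≈ f(x,y,y,z,z). -/
lemma psi_diag (a : Fin 3)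
    (h : ((a, a) ∈ ({(0, 1), (1, 0), (2, 2)} : Set (Fin 3 × Fin 3)))) : a = 2 := by
  simp only [Set.mem_insert_iff, Set.mem_singleton_iff, Prod.mk.injEq] at h
  fin_cases a <;> simp_all

lemma rho_left (a b : Fin 3)
    (h : ((a, b) ∈ ({(0, 2), (1, 2), (2, 0), (2, 1)} : Set (Fin 3 × Fin 3))))
    (ha : a = 2) : b ≠ 2 := by
  simp only [Set.mem_insert_iff, Set.mem_singleton_iff, Prod.mk.injEq] at h
  subst ha; fin_cases b <;> simp_all

lemma rho_right (a b : Fin 3)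
    (h : ((a, b) ∈ ({(0, 2), (1, 2), (2, 0), (2, 1)} : Set (Fin 3 × Fin 3))))
    (ha : a ≠ 2) : b = 2 := by
  simp only [Set.mem_insert_iff, Set.mem_singleton_iff, Prod.mk.injEq] at h
  fin_cases a <;> fin_cases b <;> simp_all

lemma main5 : ¬ ∃ f : (Fin 5 → Fin 3) → Fin 3,
      Preserves f psi2 ∧ Preserves f rho2 ∧
      (∀ (π : Equiv.Perm (Fin 5)) (x : Fin 5 → Fin 3), f (x ∘ π) = f x) ∧
      (∀ x y z : Fin 3, f ![x, x, y, y, z] = f ![x, y, y, z, z]) := by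
  rintro ⟨f, hψ, hρ, hsym, hid⟩
  -- Step 1: f (0,0,1,1,2) = 2
  have s1 : f ![0,0,1,1,2] = 2 := by
    set r : Fin 5 → Fin 2 → Fin 3 := ![![0,1],![0,1],![1,0],![1,0],![2,2]] with hr
    have hmem : ∀ i, r i ∈ psi2 := by intro i; fin_cases i <;> simp [psi2, r]
    have h : (f (fun i => r i 0), f (fun i => r i 1))
        ∈ ({(0, 1), (1, 0), (2, 2)} : Set (Fin 3 × Fin 3)) := hψ r hmem
    have e0 : (fun i => r i 0) = ![0,0,1,1,2] := by funext i; fin_cases i <;> rfl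
    have e1 : (fun i => r i 1) = ![1,1,0,0,2] := by funext i; fin_cases i <;> rfl
    rw [e0, e1] at h
    have hswap : (![0,0,1,1,2] : Fin 5 → Fin 3) ∘
        ((Equiv.swap 0 2) * (Equiv.swap 1 3) : Equiv.Perm (Fin 5)) = ![1,1,0,0,2] := by
      funext i; fin_cases i <;> simp [Equiv.swap_apply_def]
    have heq : f ![1,1,0,0,2] = f ![0,0,1,1,2] := by
      rw [← hswap]; exact hsym _ _
    rw [heq] at h
    exact psi_diag _ h
  -- Step 2: f (0,1,2,2,2) = 2
  have s2 : f ![0,1,2,2,2] = 2 := by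
    set r : Fin 5 → Fin 2 → Fin 3 := ![![0,1],![1,0],![2,2],![2,2],![2,2]] with hr
    have hmem : ∀ i, r i ∈ psi2 := by intro i; fin_cases i <;> simp [psi2, r]
    have h : (f (fun i => r i 0), f (fun i => r i 1))
        ∈ ({(0, 1), (1, 0), (2, 2)} : Set (Fin 3 × Fin 3)) := hψ r hmem
    have e0 : (fun i => r i 0) = ![0,1,2,2,2] := by funext i; fin_cases i <;> rfl
    have e1 : (fun i => r i 1) = ![1,0,2,2,2] := by funext i; fin_cases i <;> rfl
    rw [e0, e1] at h
    have hswap : (![0,1,2,2,2] : Fin 5 → Fin 3) ∘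
        ((Equiv.swap 0 1) : Equiv.Perm (Fin 5)) = ![1,0,2,2,2] := by
      funext i; fin_cases i <;> simp [Equiv.swap_apply_def]
    have heq : f ![1,0,2,2,2] = f ![0,1,2,2,2] := by
      rw [← hswap]; exact hsym _ _
    rw [heq] at h
    exact psi_diag _ h
  -- Step 3: f (2,2,0,0,0) ≠ 2
  have s3 : f ![2,2,0,0,0] ≠ 2 := by
    set r : Fin 5 → Fin 2 → Fin 3 := ![![0,2],![1,2],![2,0],![2,0],![2,0]] with hr
    have hmem : ∀ i, r i ∈ rho2 := by intro i; fin_cases i <;> simp [rho2, r]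
    have h : (f (fun i => r i 0), f (fun i => r i 1))
        ∈ ({(0, 2), (1, 2), (2, 0), (2, 1)} : Set (Fin 3 × Fin 3)) := hρ r hmem
    have e0 : (fun i => r i 0) = ![0,1,2,2,2] := by funext i; fin_cases i <;> rfl
    have e1 : (fun i => r i 1) = ![2,2,0,0,0] := by funext i; fin_cases i <;> rfl
    rw [e0, e1] at h
    exact rho_left _ _ h s2
  -- Step 4: f (0,0,2,2,2) = 2
  have s4 : f ![0,0,2,2,2] = 2 := by
    set r : Fin 5 → Fin 2 → Fin 3 := ![![2,0],![2,0],![0,2],![0,2],![0,2]] with hr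
    have hmem : ∀ i, r i ∈ rho2 := by intro i; fin_cases i <;> simp [rho2, r]
    have h : (f (fun i => r i 0), f (fun i => r i 1))
        ∈ ({(0, 2), (1, 2), (2, 0), (2, 1)} : Set (Fin 3 × Fin 3)) := hρ r hmem
    have e0 : (fun i => r i 0) = ![2,2,0,0,0] := by funext i; fin_cases i <;> rfl
    have e1 : (fun i => r i 1) = ![0,0,2,2,2] := by funext i; fin_cases i <;> rfl
    rw [e0, e1] at h
    exact rho_right _ _ h s3
  -- Step 5: f (2,2,2,0,0) = 2
  have s5 : f ![2,2,2,0,0] = 2 := by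
    have hperm : ∀ i, (![2,3,4,0,1] : Fin 5 → Fin 5) ((![3,4,0,1,2] : Fin 5 → Fin 5) i) = i ∧
        (![3,4,0,1,2] : Fin 5 → Fin 5) ((![2,3,4,0,1] : Fin 5 → Fin 5) i) = i := by decide
    set π : Equiv.Perm (Fin 5) :=
      ⟨![2,3,4,0,1], ![3,4,0,1,2], fun i => (hperm i).2, fun i => (hperm i).1⟩ with hπ
    have hcomp : (![0,0,2,2,2] : Fin 5 → Fin 3) ∘ π = ![2,2,2,0,0] := by
      funext i; fin_cases i <;> rfl
    have h := hsym π ![0,0,2,2,2]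
    rw [hcomp] at h
    rw [h]; exact s4
  -- Step 6: f (2,2,2,2,0) ≠ 2
  have s6 : f ![2,2,2,2,0] ≠ 2 := by
    set r : Fin 5 → Fin 2 → Fin 3 := ![![0,2],![0,2],![1,2],![1,2],![2,0]] with hr
    have hmem : ∀ i, r i ∈ rho2 := by intro i; fin_cases i <;> simp [rho2, r]
    have h : (f (fun i => r i 0), f (fun i => r i 1))
        ∈ ({(0, 2), (1, 2), (2, 0), (2, 1)} : Set (Fin 3 × Fin 3)) := hρ r hmem
    have e0 : (fun i => r i 0) = ![0,0,1,1,2] := by funext i; fin_cases i <;> rfl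
    have e1 : (fun i => r i 1) = ![2,2,2,2,0] := by funext i; fin_cases i <;> rfl
    rw [e0, e1] at h
    exact rho_left _ _ h s1
  -- Contradiction via the identity
  have hid' := hid 2 2 0
  rw [hid'] at s6
  exact s6 s5


/-- No 5-ary operation on `{0,1,2}` preserving both `ψ₂` and `ρ₂` is totally symmetric
and satisfies `f(x,x,y,y,z) ≈ f(x,y,y,z,z)`; in particular
`ℳ₀ = Pol(ψ₂,ρ₂,{0,1},{0},{1},{2})` does not satisfy the minor condition `Σ₂`. -/
theorem stmt15 :
    (¬ ∃ f : (Fin 5 → Fin 3) → Fin 3,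
      Preserves f psi2 ∧ Preserves f rho2 ∧
      (∀ (π : Equiv.Perm (Fin 5)) (x : Fin 5 → Fin 3), f (x ∘ π) = f x) ∧
      (∀ x y z : Fin 3, f ![x, x, y, y, z] = f ![x, y, y, z, z])) ∧
    (¬ ∃ f : (Fin 5 → Fin 3) → Fin 3,
      (Preserves f psi2 ∧ Preserves f rho2 ∧ Preserves f (unRel {0, 1}) ∧
        ∀ c : Fin 3, Preserves f (unRel {c})) ∧
      (∀ (π : Equiv.Perm (Fin 5)) (x : Fin 5 → Fin 3), f (x ∘ π) = f x) ∧
      (∀ x y z : Fin 3, f ![x, x, y, y, z] = f ![x, y, y, z, z])) := by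
  refine ⟨main5, ?_⟩
  rintro ⟨f, ⟨h1, h2, _, _⟩, h3, h4⟩
  exact main5 ⟨f, h1, h2, h3, h4⟩
end

section
/- Define the 5-ary operation f on {0,1,2} by f(x₁,…,x₅) = maj₅(x₁,…,x₅) if all xᵢ ∈ {0,1}, and f(x₁,…,x₅) = 2 otherwise, where maj₅ on {0,1} returns the value that appears at least 3 times among its five arguments. Then f is totally symmetric (invariant under all permutations of its arguments), satisfies f(x,x,y,y,z) = f(x,y,y,z,z) for all x,y,z, is idempotent, and preserves the relations ψ₂ and μ₂. In particular, f is a polymorphism of 𝕄₁ = ({0,1,2}; ψ₂, μ₂, {0},{1},{2}) witnessing that Pol(𝕄₁) satisfies the minor condition Σ₂ asking for a 5-ary symmetric operation with f(x,x,y,y,z) ≈ f(x,y,y,z,z). -/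
set_option maxRecDepth 10000


/-- The 5-ary operation `f` on `{0,1,2}`: the Boolean majority (value occurring at least
3 times) if all arguments lie in `{0,1}`, and `2` otherwise. -/
def f5 : (Fin 5 → Fin 3) → Fin 3 := fun x =>
  if ∀ i, x i ≠ 2 then
    (if 3 ≤ (Finset.univ.filter fun i => x i = 1).card then 1 else 0)
  else 2

lemma f5_idem : ∀ a : Fin 3, f5 (fun _ => a) = a := by decide

lemma f5_eq_two {x : Fin 5 → Fin 3} (i : Fin 5) (h : x i = 2) : f5 x = 2 := by
  unfold f5
  rw [if_neg]
  push_neg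
  exact ⟨i, h⟩

lemma f5_mem01 {x : Fin 5 → Fin 3} (h : ∀ i, x i ≠ 2) : f5 x = 0 ∨ f5 x = 1 := by
  unfold f5
  rw [if_pos h]
  split <;> simp

lemma f5_symm (π : Equiv.Perm (Fin 5)) (x : Fin 5 → Fin 3) : f5 (x ∘ π) = f5 x := by
  unfold f5
  have h1 : (∀ i, (x ∘ π) i ≠ 2) ↔ (∀ i, x i ≠ 2) :=
    ⟨fun h i => by simpa using h (π.symm i), fun h i => h (π i)⟩
  have h2 : (Finset.univ.filter fun i => (x ∘ π) i = 1).card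
      = (Finset.univ.filter fun i => x i = 1).card := by
    apply Finset.card_bij (fun i _ => π i)
    · intro a ha; simpa using (Finset.mem_filter.mp ha).2
    · intro a _ b _ h; exact π.injective h
    · intro b hb; exact ⟨π.symm b, by simpa using (Finset.mem_filter.mp hb).2, by simp⟩
  simp only [h1, h2]

lemma psi2_cases {t : Fin 2 → Fin 3} (h : t ∈ psi2) :
    (t 0 = 0 ∧ t 1 = 1) ∨ (t 0 = 1 ∧ t 1 = 0) ∨ (t 0 = 2 ∧ t 1 = 2) := by
  simpa [psi2, Set.mem_insert_iff, Set.mem_singleton_iff, Prod.ext_iff] using h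

lemma mu2_cases {t : Fin 2 → Fin 3} (h : t ∈ mu2) :
    (t 0 = 2 ∧ t 1 = 2) ∨ (t 0 ≠ 2 ∧ t 1 ≠ 2) := by
  have h' : (t 0 = 0 ∧ t 1 = 0) ∨ (t 0 = 1 ∧ t 1 = 1) ∨ (t 0 = 2 ∧ t 1 = 2) ∨
      (t 0 = 0 ∧ t 1 = 1) ∨ (t 0 = 1 ∧ t 1 = 0) := by
    simpa [mu2, Set.mem_insert_iff, Set.mem_singleton_iff, Prod.ext_iff] using h
  rcases h' with ⟨h0, h1⟩ | ⟨h0, h1⟩ | ⟨h0, h1⟩ | ⟨h0, h1⟩ | ⟨h0, h1⟩ <;>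
    rw [h0, h1] <;> simp

lemma f5_psi2 : Preserves f5 psi2 := by
  intro r hr
  have hr' := fun i => psi2_cases (hr i)
  show (fun j => f5 fun i => r i j) ∈ psi2
  by_cases h : ∃ i, r i 0 = 2
  · obtain ⟨i, hi⟩ := h
    have hb : r i 1 = 2 := by
      rcases hr' i with ⟨h0, h1⟩ | ⟨h0, h1⟩ | ⟨h0, h1⟩ <;> simp_all
    have e0 : f5 (fun i => r i 0) = 2 := f5_eq_two i hi
    have e1 : f5 (fun i => r i 1) = 2 := f5_eq_two i hb
    simp [psi2, Set.mem_insert_iff, Set.mem_singleton_iff, Prod.ext_iff, e0, e1]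
  · push_neg at h
    have h1 : ∀ i, r i 1 ≠ 2 := by
      intro i hi
      rcases hr' i with ⟨h0', h1'⟩ | ⟨h0', h1'⟩ | ⟨h0', h1'⟩ <;> simp_all
    have key : (Finset.univ.filter fun i => r i 1 = 1).card
        = 5 - (Finset.univ.filter fun i => r i 0 = 1).card := by
      have e1 : (Finset.univ.filter fun i => r i 1 = 1)
          = (Finset.univ.filter fun i => ¬ (r i 0 = 1)) := by
        apply Finset.filter_congr
        intro i _
        rcases hr' i with ⟨h0', h1'⟩ | ⟨h0', h1'⟩ | ⟨h0', h1'⟩ <;> simp_all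
      rw [e1]
      have := Finset.card_filter_add_card_filter_not (s := Finset.univ)
        (p := fun i : Fin 5 => r i 0 = 1)
      simp only [Finset.card_univ, Fintype.card_fin] at this
      omega
    have hle : (Finset.univ.filter fun i => r i 0 = 1).card ≤ 5 := by
      have := Finset.card_filter_le Finset.univ (fun i : Fin 5 => r i 0 = 1)
      simpa using this
    set n := (Finset.univ.filter fun i => r i 0 = 1).card with hn
    have e0 : f5 (fun i => r i 0) = (if 3 ≤ n then 1 else 0) := by
      unfold f5; rw [if_pos h]
    have e1 : f5 (fun i => r i 1) = (if 3 ≤ 5 - n then 1 else 0) := by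
      unfold f5; rw [if_pos h1]; rw [key]
    by_cases h3 : 3 ≤ n
    · rw [if_pos h3] at e0
      rw [if_neg (by omega)] at e1
      simp [psi2, Set.mem_insert_iff, Set.mem_singleton_iff, Prod.ext_iff, e0, e1]
    · rw [if_neg h3] at e0
      rw [if_pos (by omega)] at e1
      simp [psi2, Set.mem_insert_iff, Set.mem_singleton_iff, Prod.ext_iff, e0, e1]

lemma f5_mu2 : Preserves f5 mu2 := by
  intro r hr
  have hr' := fun i => mu2_cases (hr i)
  show (fun j => f5 fun i => r i j) ∈ mu2
  by_cases h : ∃ i, r i 0 = 2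
  · obtain ⟨i, hi⟩ := h
    have hb : r i 1 = 2 := by rcases hr' i with ⟨h0, h1⟩ | ⟨h0, h1⟩ <;> simp_all
    have e0 : f5 (fun i => r i 0) = 2 := f5_eq_two i hi
    have e1 : f5 (fun i => r i 1) = 2 := f5_eq_two i hb
    simp [mu2, Set.mem_insert_iff, Set.mem_singleton_iff, Prod.ext_iff, e0, e1]
  · push_neg at h
    have h1 : ∀ i, r i 1 ≠ 2 := by
      intro i hi
      rcases hr' i with ⟨h0', h1'⟩ | ⟨h0', h1'⟩ <;> simp_all
    have e0 := f5_mem01 (x := fun i => r i 0) h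
    have e1 := f5_mem01 (x := fun i => r i 1) h1
    rcases e0 with e0 | e0 <;> rcases e1 with e1 | e1 <;>
      simp [mu2, Set.mem_insert_iff, Set.mem_singleton_iff, Prod.ext_iff, e0, e1]

lemma f5_unRel (c : Fin 3) : Preserves f5 (unRel {c}) := by
  intro r hr
  show (fun j => f5 fun i => r i j) ∈ unRel {c}
  have hc : ∀ i, r i 0 = c := fun i => hr i
  simp only [unRel, Set.mem_setOf_eq]
  have e : (fun i => r i 0) = (fun _ => c) := funext hc
  rw [e, f5_idem]
  rfl

/-- `f5` is totally symmetric, satisfies `f(x,x,y,y,z) = f(x,y,y,z,z)`, is idempotent,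
and preserves `ψ₂` and `μ₂` (and the singletons); hence it is a polymorphism of
`𝕄₁ = ({0,1,2}; ψ₂, μ₂, {0},{1},{2})` witnessing the minor condition `Σ₂`. -/
theorem stmt16 :
    (∀ (π : Equiv.Perm (Fin 5)) (x : Fin 5 → Fin 3), f5 (x ∘ π) = f5 x) ∧
    (∀ x y z : Fin 3, f5 ![x, x, y, y, z] = f5 ![x, y, y, z, z]) ∧
    (∀ a : Fin 3, f5 (fun _ => a) = a) ∧
    Preserves f5 psi2 ∧ Preserves f5 mu2 ∧
    (∀ c : Fin 3, Preserves f5 (unRel {c})) := by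
  exact ⟨f5_symm, by decide, f5_idem, f5_psi2, f5_mu2, f5_unRel⟩
end

section
/- There is no minority operation f on {0,1,2} (i.e., ternary f with f(x,y,y) = f(y,x,y) = f(y,y,x) = x for all x,y) that preserves the 4-ary relation T = {(x, y, z, w) ∈ {0,1,2}⁴ : w = x − y + z mod 3}. Consequently, the clone 𝒵₃ = Pol(T, {0},{1},{2}) contains no minority (and, being idempotent, no quasi minority) operation. -/
lemma no_min_aux (f : (Fin 3 → Fin 3) → Fin 3)
    (hmin : ∀ x y : Fin 3, f ![x, y, y] = x ∧ f ![y, x, y] = x ∧ f ![y, y, x] = x)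
    (hpres : Preserves f Trel) : False := by
  have h := hpres ![![1,0,0,1], ![0,1,0,2], ![0,0,1,1]]
    (by intro i; fin_cases i <;> simp [Trel] <;> decide)
  have e0 : (fun i => (![![1,0,0,1], ![0,1,0,2], ![0,0,1,1]] : Fin 3 → Fin 4 → Fin 3) i 0) = ![(1:Fin 3),0,0] := by
    funext i; fin_cases i <;> rfl
  have e1 : (fun i => (![![1,0,0,1], ![0,1,0,2], ![0,0,1,1]] : Fin 3 → Fin 4 → Fin 3) i 1) = ![(0:Fin 3),1,0] := by
    funext i; fin_cases i <;> rfl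
  have e2 : (fun i => (![![1,0,0,1], ![0,1,0,2], ![0,0,1,1]] : Fin 3 → Fin 4 → Fin 3) i 2) = ![(0:Fin 3),0,1] := by
    funext i; fin_cases i <;> rfl
  have e3 : (fun i => (![![1,0,0,1], ![0,1,0,2], ![0,0,1,1]] : Fin 3 → Fin 4 → Fin 3) i 3) = ![(1:Fin 3),2,1] := by
    funext i; fin_cases i <;> rfl
  have h' : f ![(1:Fin 3),2,1] = f ![(1:Fin 3),0,0] - f ![(0:Fin 3),1,0] + f ![(0:Fin 3),0,1] := by
    have := h; simp only [Trel, Set.mem_setOf_eq] at this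
    rw [e0, e1, e2, e3] at this; exact this
  rw [(hmin 2 1).2.1, (hmin 1 0).1, (hmin 1 0).2.1, (hmin 1 0).2.2] at h'
  exact absurd h' (by decide)

/-- No minority operation on `{0,1,2}` preserves `T = {(x,y,z,x-y+z mod 3)}`;
consequently `𝒵₃ = Pol(T,{0},{1},{2})` contains no minority, and no quasi minority,
operation. -/
theorem stmt17 :
    (¬ ∃ f : (Fin 3 → Fin 3) → Fin 3,
      (∀ x y : Fin 3, f ![x, y, y] = x ∧ f ![y, x, y] = x ∧ f ![y, y, x] = x) ∧
      Preserves f Trel) ∧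
    (¬ ∃ f : (Fin 3 → Fin 3) → Fin 3,
      (∀ x y : Fin 3, f ![x, y, y] = f ![x, x, x] ∧ f ![y, x, y] = f ![x, x, x] ∧
        f ![y, y, x] = f ![x, x, x]) ∧
      Preserves f Trel ∧ (∀ c : Fin 3, Preserves f (unRel {c}))) := by
  constructor
  · rintro ⟨f, hmin, hpres⟩
    exact no_min_aux f hmin hpres
  · rintro ⟨f, hq, hpres, hun⟩
    have hid : ∀ x : Fin 3, f ![x, x, x] = x := by
      intro x
      have h := hun x (fun _ _ => x) (by intro i; simp [unRel])
      have : f (fun _ => x) = x := h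
      have e : (![x, x, x] : Fin 3 → Fin 3) = fun _ => x := by
        funext i; fin_cases i <;> rfl
      rw [e]; exact this
    refine no_min_aux f (fun x y => ?_) hpres
    obtain ⟨h1, h2, h3⟩ := hq x y
    exact ⟨h1.trans (hid x), h2.trans (hid x), h3.trans (hid x)⟩
end

section
/- There is no ternary operation f on {0,1,2} that preserves the relation φ = {(0,1),(1,2),(2,0)} and satisfies the 3-cyclic identity f(x,y,z) = f(y,z,x) for all x,y,z. Consequently, the clone 𝒞₃ = Pol(φ, {0},{1},{2}) has no 3-cyclic operation, whereas the Boolean minority operation min (min(x,y,y)=min(y,x,y)=min(y,y,x)=x on {0,1}) is a 3-cyclic operation in 𝒵₂ = Pol({(x,y,z,w) ∈ {0,1}⁴ : w = x+y+z mod 2}, {0},{1}); hence there is no minion homomorphism from 𝒵₂ to 𝒞₃. -/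
/-- `𝒞₃ = Pol(φ,{0},{1},{2})` on `{0,1,2}`. -/
def CloneC3 : Ops (Fin 3) := fun _ =>
  {f | Preserves f phi ∧ ∀ c : Fin 3, Preserves f (unRel {c})}

/-- The Boolean minority operation on `{0,1}`. -/
def min2 : (Fin 3 → Fin 2) → Fin 2 := fun x => x 0 + x 1 + x 2

/-! A 3-cyclic operation `f` preserving a binary relation `R` sends the three edges
`(a,b), (b,c), (c,a)` of a directed triangle of `R` to the pair `(f(a,b,c), f(b,c,a))`,
which cyclicity turns into a loop; `φ` is a directed triangle without loops.
The Boolean minority is 3-cyclic, and 3-cyclicity is the minor identity `f = f_σ` for the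
rotation `σ = (1 2 0)`, so minion homomorphisms preserve it. -/

def IsCyclic3 {A : Type} (f : (Fin 3 → A) → A) : Prop :=
  ∀ x y z : A, f ![x, y, z] = f ![y, z, x]

theorem isCyclic3_iff_minor_eq {A : Type} {f : (Fin 3 → A) → A} :
    IsCyclic3 f ↔ Minor f ![1, 2, 0] = f := by
  have minor_apply : ∀ x y z : A, Minor f ![1, 2, 0] ![x, y, z] = f ![y, z, x] := by
    intro x y z
    simp only [Minor]
    congr 1
    funext i
    fin_cases i <;> rfl
  constructor
  · intro hf
    funext v
    rw [← FinVec.etaExpand_eq v]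
    simp only [FinVec.etaExpand, FinVec.map, FinVec.seq, minor_apply]
    exact (hf _ _ _).symm
  · intro hf x y z
    rw [← minor_apply x y z, hf]

theorem IsCyclic3.mem_of_preserves {A : Type} {f : (Fin 3 → A) → A} (hf : IsCyclic3 f)
    {R : Set (Fin 2 → A)} (hR : Preserves f R) {a b c : A}
    (hab : ![a, b] ∈ R) (hbc : ![b, c] ∈ R) (hca : ![c, a] ∈ R) :
    ![f ![a, b, c], f ![a, b, c]] ∈ R := by
  have hmem := hR ![![a, b], ![b, c], ![c, a]] (by
    intro i
    fin_cases i <;> assumption)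
  have columns : (fun j => f fun i => ![![a, b], ![b, c], ![c, a]] i j) =
      ![f ![a, b, c], f ![b, c, a]] := by
    funext j
    fin_cases j <;> exact congrArg f (by funext i; fin_cases i <;> rfl)
  rwa [columns, ← hf a b c] at hmem

theorem not_isCyclic3_of_preserves_phi (f : (Fin 3 → Fin 3) → Fin 3) (hf : Preserves f phi) :
    ¬ IsCyclic3 f := by
  intro hcyc
  have hloop := hcyc.mem_of_preserves hf (a := 0) (b := 1) (c := 2)
    (by simp [phi]) (by simp [phi]) (by simp [phi])
  revert hloop
  generalize f ![0, 1, 2] = d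
  fin_cases d <;> simp [phi]

theorem IsMinionHom.isCyclic3 {A B : Type} {C : Ops A} {D : Ops B}
    {ξ : ∀ n : ℕ, ((Fin (n + 1) → A) → A) → ((Fin (n + 1) → B) → B)}
    (hξ : IsMinionHom C D ξ) {f : (Fin 3 → A) → A} (hfC : f ∈ C 2) (hf : IsCyclic3 f) :
    IsCyclic3 (ξ 2 f) := by
  rw [isCyclic3_iff_minor_eq] at hf ⊢
  rw [← hξ.2 2 2 f _ hfC, hf]

theorem min2_mem_cloneZ2 : min2 ∈ CloneZ2 2 := by
  have preserves_const : ∀ c : Fin 2, Preserves min2 (unRel {c}) := by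
    intro c
    have triple_eq : c + c + c = c := by revert c; decide
    intro r hr
    simp only [unRel, Set.mem_ofPred_eq, Set.mem_singleton_iff] at hr ⊢
    simp only [min2, hr, triple_eq]
  refine ⟨?_, preserves_const 0, preserves_const 1⟩
  intro r hr
  simp only [Z2rel, Set.mem_ofPred_eq] at hr ⊢
  simp only [min2, hr 0, hr 1, hr 2]
  open Fin.CommRing in ring

theorem min2_isCyclic3 : IsCyclic3 min2 := by
  unfold IsCyclic3
  decide

/-- No ternary operation on `{0,1,2}` preserving `φ` is 3-cyclic; the Boolean minority
operation is a 3-cyclic member of `𝒵₂`; hence there is no minion homomorphism from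
`𝒵₂` to `𝒞₃ = Pol(φ,{0},{1},{2})`. -/
theorem stmt19 :
    (¬ ∃ f : (Fin 3 → Fin 3) → Fin 3,
      Preserves f phi ∧ ∀ x y z : Fin 3, f ![x, y, z] = f ![y, z, x]) ∧
    ((∀ x y : Fin 2, min2 ![x, y, y] = x ∧ min2 ![y, x, y] = x ∧ min2 ![y, y, x] = x) ∧
      min2 ∈ CloneZ2 2 ∧
      (∀ x y z : Fin 2, min2 ![x, y, z] = min2 ![y, z, x])) ∧
    ¬ MinorLE CloneZ2 CloneC3 := by
  refine ⟨fun ⟨f, hf, hcyc⟩ => not_isCyclic3_of_preserves_phi f hf hcyc,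
    ⟨by decide, min2_mem_cloneZ2, min2_isCyclic3⟩, ?_⟩
  rintro ⟨ξ, hξ⟩
  exact not_isCyclic3_of_preserves_phi _ (hξ.1 2 min2 min2_mem_cloneZ2).1
    (hξ.isCyclic3 min2_mem_cloneZ2 min2_isCyclic3)
end
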